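/- Let X ⊆ [0,1)^d and let D be a probability measure on X. Let S = (x₁,…,x_n) be an i.i.d. sample of size n from D and let x be drawn from D independently of S. Then E[ min_{1 ≤ i ≤ n} ‖x − x_i‖₂ ] ≤ 2√d · n^{−1/(d+1)} + (√d / (2^d · e)) · n^{−1/(d+1)}, where ‖·‖₂ is the Euclidean norm and e is Euler's number. -/

import Mathlib

/-!
Cut `[0,1)^d` into `m^d` cubes of side `1/m`. If some sample point lies in the cube of `x`, the
nearest neighbour is within the cube's diameter `√d/m`; otherwise it is still within `√d`. A cube
of mass `p` is the cube of `x` while receiving no sample with probability `p(1-p)^n ≤ 1/(en)`, so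
the expected distance is at most `√d/m + √d·m^d/(en)`. Taking `m = ⌈n^{1/(d+1)}/2⌉` balances the
two terms.
-/

open MeasureTheory Set

lemma mul_one_sub_pow_le_inv_exp_mul {p : ℝ} (hp0 : 0 ≤ p) (hp1 : p ≤ 1) {n : ℕ} (hn : 0 < n) :
    p * (1 - p) ^ n ≤ (Real.exp 1 * n)⁻¹ := by
  have hn' : (0 : ℝ) < n := Nat.cast_pos.2 hn
  have hpow : (1 - p) ^ n ≤ Real.exp (-p) ^ n :=
    pow_le_pow_left₀ (by linarith) (by linarith [Real.add_one_le_exp (-p)]) n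
  calc p * (1 - p) ^ n ≤ p * Real.exp (-p) ^ n := mul_le_mul_of_nonneg_left hpow hp0
    _ = p * n * Real.exp (-(p * n)) / n := by
      rw [← Real.exp_nat_mul]; field_simp
    _ ≤ Real.exp (-1) / n := by gcongr; exact Real.mul_exp_neg_le_exp_neg_one _
    _ = (Real.exp 1 * n)⁻¹ := by rw [Real.exp_neg]; field_simp

lemma inv_add_mul_pow_le {c u : ℝ} (d : ℕ) (hc0 : 0 ≤ c) (hc1 : c ≤ 1)
    (hu : u ∈ Icc (1 / 2 : ℝ) 1) : u⁻¹ + c * u ^ d ≤ 2 + c * (1 / 2) ^ d := by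
  have hconv : ConvexOn ℝ (Ioi 0) fun u : ℝ => u ^ (-1 : ℤ) + c • u ^ d :=
    (convexOn_zpow (-1)).add
      (((convexOn_pow d).subset Ioi_subset_Ici_self (convex_Ioi 0)).smul hc0)
  have hseg : u ∈ segment ℝ (1 / 2 : ℝ) 1 := by rwa [segment_eq_Icc (by norm_num)]
  have := hconv.le_on_segment (by norm_num : (1 / 2 : ℝ) ∈ Ioi 0) (by norm_num) hseg
  simp only [zpow_neg_one, smul_eq_mul, one_pow, mul_one] at this
  refine this.trans (max_le (by norm_num) ?_)
  linarith [mul_nonneg hc0 (pow_nonneg (by norm_num : (0 : ℝ) ≤ 1 / 2) d)]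

lemma exists_nat_inv_add_pow_div_le (d : ℕ) {n : ℕ} (hn : 0 < n) :
    ∃ m : ℕ, 0 < m ∧ (m : ℝ)⁻¹ + m ^ d / (Real.exp 1 * n)
      ≤ (2 + (2 ^ d * Real.exp 1)⁻¹) * (n : ℝ) ^ (-(1 : ℝ) / (d + 1)) := by
  set t : ℝ := (n : ℝ) ^ ((1 : ℝ) / (d + 1))
  have hn1 : (1 : ℝ) ≤ n := Nat.one_le_cast.2 hn
  have ht1 : 1 ≤ t := Real.one_le_rpow hn1 (by positivity)
  have htn : t ^ (d + 1) = n := by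
    rw [← Real.rpow_natCast, ← Real.rpow_mul (by positivity)]
    push_cast
    rw [one_div_mul_cancel (by positivity), Real.rpow_one]
  have hnt : (n : ℝ) ^ (-(1 : ℝ) / (d + 1)) = t⁻¹ := by
    rw [neg_div, Real.rpow_neg (by positivity)]
  set m := ⌈t / 2⌉₊
  have hm1 : t / 2 ≤ m := Nat.le_ceil _
  have hm2 : (m : ℝ) ≤ t :=
    (Nat.ceil_le_two_mul (by linarith)).trans_eq (by ring)
  have hm0 : (0 : ℝ) < m := by linarith
  refine ⟨m, Nat.cast_pos.1 hm0, ?_⟩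
  have hu : (m / t : ℝ) ∈ Icc (1 / 2 : ℝ) 1 := by
    constructor
    · rw [le_div_iff₀ (by linarith)]; linarith
    · rw [div_le_one (by linarith)]; exact hm2
  have key := inv_add_mul_pow_le d (inv_nonneg.2 (Real.exp_pos 1).le)
    (inv_le_one_of_one_le₀ (Real.one_le_exp zero_le_one)) hu
  rw [hnt, ← htn]
  calc (m : ℝ)⁻¹ + m ^ d / (Real.exp 1 * t ^ (d + 1))
      = ((m / t)⁻¹ + (Real.exp 1)⁻¹ * (m / t) ^ d) * t⁻¹ := by
        rw [div_pow]; field_simp; ring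
    _ ≤ (2 + (Real.exp 1)⁻¹ * (1 / 2) ^ d) * t⁻¹ := by gcongr
    _ = (2 + (2 ^ d * Real.exp 1)⁻¹) * t⁻¹ := by
      rw [one_div, inv_pow, mul_inv]; ring

namespace EuclideanSpace

variable {ι : Type*} [Fintype ι]

lemma dist_le_sqrt_card_mul {x y : EuclideanSpace ℝ ι} {ε : ℝ} (hε : 0 ≤ ε)
    (h : ∀ i, |x i - y i| ≤ ε) : dist x y ≤ √(Fintype.card ι) * ε := by
  rw [EuclideanSpace.dist_eq, ← Real.sqrt_sq hε, ← Real.sqrt_mul (Nat.cast_nonneg _)]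
  refine Real.sqrt_le_sqrt ?_
  calc ∑ i, dist (x i) (y i) ^ 2 ≤ ∑ _i : ι, ε ^ 2 := by
        gcongr with i
        rw [Real.dist_eq]
        exact h i
    _ = Fintype.card ι * ε ^ 2 := by simp

lemma dist_le_sqrt_card_of_forall_mem_Ico {x y : EuclideanSpace ℝ ι}
    (hx : ∀ i, x i ∈ Ico 0 1) (hy : ∀ i, y i ∈ Ico 0 1) : dist x y ≤ √(Fintype.card ι) := by
  simpa using dist_le_sqrt_card_mul zero_le_one fun i =>
    (Int.abs_sub_lt_one_of_floor_eq_floor <|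
      (Int.floor_eq_zero_iff.2 (hx i)).trans (Int.floor_eq_zero_iff.2 (hy i)).symm).le

end EuclideanSpace

noncomputable def cubeIndex {ι : Type*} (m : ℕ) (x : EuclideanSpace ℝ ι) : ι → ℤ :=
  fun i => ⌊m * x i⌋

section cubeIndex

variable {ι : Type*} [Fintype ι]

lemma measurable_cubeIndex (m : ℕ) : Measurable (cubeIndex m : EuclideanSpace ℝ ι → ι → ℤ) :=
  measurable_pi_lambda _ fun i =>
    Int.measurable_floor.comp (measurable_const.mul (EuclideanSpace.proj i).continuous.measurable)

lemma cubeIndex_mem_piFinset [DecidableEq ι] {m : ℕ} (hm : 0 < m) {x : EuclideanSpace ℝ ι}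
    (hx : ∀ i, x i ∈ Ico 0 1) : cubeIndex m x ∈ Fintype.piFinset fun _ => Finset.Ico (0 : ℤ) m := by
  have hm' : (0 : ℝ) < m := Nat.cast_pos.2 hm
  refine Fintype.mem_piFinset.2 fun i => Finset.mem_Ico.2 ⟨?_, ?_⟩
  · exact Int.floor_nonneg.2 (mul_nonneg hm'.le (hx i).1)
  · exact Int.floor_lt.2 (by exact_mod_cast mul_lt_of_lt_one_right hm' (hx i).2)

lemma dist_le_of_cubeIndex_eq {m : ℕ} (hm : 0 < m) {x y : EuclideanSpace ℝ ι}
    (h : cubeIndex m x = cubeIndex m y) : dist x y ≤ √(Fintype.card ι) / m := by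
  have hm' : (0 : ℝ) < m := Nat.cast_pos.2 hm
  rw [div_eq_mul_one_div]
  refine EuclideanSpace.dist_le_sqrt_card_mul (by positivity) fun i => ?_
  have := Int.abs_sub_lt_one_of_floor_eq_floor (congrFun h i)
  rw [← mul_sub, abs_mul, Nat.abs_cast] at this
  rw [le_div_iff₀ hm', mul_comm]
  exact this.le

end cubeIndex

section NearestNeighbor

variable {α ι : Type*} [MeasurableSpace α] {D : Measure α} [IsProbabilityMeasure D] {n : ℕ}

lemma measureReal_biUnion_prod_pi_compl_le {κ : α → ι} (hn : 0 < n)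
    (hκ : ∀ c, MeasurableSet (κ ⁻¹' {c})) (s : Finset ι) :
    (D.prod (Measure.pi fun _ : Fin n => D)).real
        (⋃ c ∈ s, (κ ⁻¹' {c}) ×ˢ univ.pi fun _ => (κ ⁻¹' {c})ᶜ)
      ≤ s.card / (Real.exp 1 * n) := by
  have hpi : ∀ t : Set α,
      (Measure.pi fun _ : Fin n => D).real (univ.pi fun _ => t) = D.real t ^ n := by
    intro t
    simp [measureReal_def, Measure.pi_pi]
  calc _ ≤ ∑ c ∈ s, (D.prod (Measure.pi fun _ : Fin n => D)).real
          ((κ ⁻¹' {c}) ×ˢ univ.pi fun _ => (κ ⁻¹' {c})ᶜ) := measureReal_biUnion_finset_le _ _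
    _ = ∑ c ∈ s, D.real (κ ⁻¹' {c}) * (1 - D.real (κ ⁻¹' {c})) ^ n := by
      simp only [measureReal_prod_prod, hpi, probReal_compl_eq_one_sub (hκ _)]
    _ ≤ ∑ _c ∈ s, (Real.exp 1 * n)⁻¹ :=
      Finset.sum_le_sum fun _ _ =>
        mul_one_sub_pow_le_inv_exp_mul measureReal_nonneg measureReal_le_one hn
    _ = s.card / (Real.exp 1 * n) := by simp [div_eq_mul_inv]

theorem integral_iInf_dist_le [PseudoMetricSpace α] (hn : 0 < n) (κ : α → ι) (s : Finset ι)
    (hκs : ∀ x, κ x ∈ s) (hκ : ∀ c, MeasurableSet (κ ⁻¹' {c})) {δ R : ℝ}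
    (hR : ∀ x y : α, dist x y ≤ R) (hδ : ∀ x y, κ x = κ y → dist x y ≤ δ) :
    ∫ p, ⨅ i, dist p.1 (p.2 i) ∂(D.prod (Measure.pi fun _ : Fin n => D))
      ≤ δ + R * (s.card / (Real.exp 1 * n)) := by
  set B := ⋃ c ∈ s, (κ ⁻¹' {c}) ×ˢ univ.pi fun _ : Fin n => (κ ⁻¹' {c})ᶜ
  have hB : MeasurableSet B := Finset.measurableSet_biUnion _ fun c _ =>
    (hκ c).prod (MeasurableSet.univ_pi fun _ => (hκ c).compl)
  have hδ0 : 0 ≤ δ := by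
    obtain ⟨x⟩ := nonempty_of_isProbabilityMeasure D
    simpa using hδ x x rfl
  have hR0 : 0 ≤ R := by
    obtain ⟨x⟩ := nonempty_of_isProbabilityMeasure D
    simpa using hR x x
  have hbound : ∀ p : α × (Fin n → α),
      ⨅ i, dist p.1 (p.2 i) ≤ δ + B.indicator (fun _ => R) p := by
    intro p
    have hbdd := (Set.finite_range fun i => dist p.1 (p.2 i)).bddBelow
    by_cases hp : p ∈ B
    · rw [indicator_of_mem hp]
      exact (ciInf_le hbdd ⟨0, hn⟩).trans ((hR _ _).trans (le_add_of_nonneg_left hδ0))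
    · obtain ⟨i, hi⟩ : ∃ i, κ (p.2 i) = κ p.1 := by simpa [B, hκs] using hp
      rw [indicator_of_notMem hp, add_zero]
      exact (ciInf_le hbdd i).trans (hδ _ _ hi.symm)
  calc _ ≤ ∫ p, δ + B.indicator (fun _ => R) p ∂(D.prod (Measure.pi fun _ : Fin n => D)) :=
        integral_mono_of_nonneg (ae_of_all _ fun p => Real.iInf_nonneg fun i => dist_nonneg)
          ((integrable_const δ).add ((integrable_const R).indicator hB)) (ae_of_all _ hbound)
    _ = δ + R * (D.prod (Measure.pi fun _ : Fin n => D)).real B := by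
      rw [integral_add (integrable_const δ) ((integrable_const R).indicator hB),
        integral_indicator_const R hB]
      simp [mul_comm]
    _ ≤ δ + R * (s.card / (Real.exp 1 * n)) := by
      gcongr
      exact measureReal_biUnion_prod_pi_compl_le hn hκ s

end NearestNeighbor

/-- Lemma 6 / `L15` of the paper, motivated by Lemma 19.3 of
Shalev-Shwartz & Ben-David.  Let `X ⊆ [0,1)^d` and `D` a probability measure on `X`.
Drawing an i.i.d. sample `S = (x₁,…,x_n)` from `D^n` and an independent point `x` from
`D`, the expected Euclidean distance from `x` to its nearest neighbor in `S` is at most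
`2√d·n^{-1/(d+1)} + (√d/(2^d·e))·n^{-1/(d+1)}`. -/
theorem stmt19 {d : ℕ} (X : Set (EuclideanSpace ℝ (Fin d)))
    (hX : ∀ x ∈ X, ∀ i, x i ∈ Set.Ico (0 : ℝ) 1)
    (D : Measure ↥X) [IsProbabilityMeasure D] (n : ℕ) (hn : 1 ≤ n) :
    ∫ p : ↥X × (Fin n → ↥X),
        (⨅ i : Fin n,
          ‖(p.1 : EuclideanSpace ℝ (Fin d)) - (p.2 i : EuclideanSpace ℝ (Fin d))‖)
      ∂(D.prod (Measure.pi fun _ : Fin n => D))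
      ≤ 2 * Real.sqrt d * (n : ℝ) ^ (-(1 : ℝ) / ((d : ℝ) + 1))
        + Real.sqrt d / (2 ^ d * Real.exp 1) * (n : ℝ) ^ (-(1 : ℝ) / ((d : ℝ) + 1)) := by
  obtain ⟨m, hm, hmn⟩ := exists_nat_inv_add_pow_div_le d hn
  have hcubes := integral_iInf_dist_le (D := D) hn
    (fun x : X => cubeIndex m (x : EuclideanSpace ℝ (Fin d))) _
    (fun x => cubeIndex_mem_piFinset hm (hX x x.2))
    (fun c => ((measurable_cubeIndex m).comp measurable_subtype_coe) (measurableSet_singleton c))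
    (fun x y => EuclideanSpace.dist_le_sqrt_card_of_forall_mem_Ico (hX x x.2) (hX y y.2))
    (fun x y h => dist_le_of_cubeIndex_eq hm h)
  simp only [Subtype.dist_eq, dist_eq_norm, Fintype.card_fin, Fintype.card_piFinset,
    Int.card_Ico, sub_zero, Int.toNat_natCast, Finset.prod_const, Finset.card_univ,
    Nat.cast_pow] at hcubes
  calc _ ≤ √d / m + √d * (m ^ d / (Real.exp 1 * n)) := hcubes
    _ = √d * ((m : ℝ)⁻¹ + m ^ d / (Real.exp 1 * n)) := by ring
    _ ≤ √d * ((2 + (2 ^ d * Real.exp 1)⁻¹) * (n : ℝ) ^ (-(1 : ℝ) / (d + 1))) := by gcongr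
    _ = _ := by ring
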